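/- Let 𝒜 = ⟨A,R⟩ be an almost bounded structure and 𝒜^* an ultrapower of 𝒜 over an ultrafilter that is at least κ-regular for some infinite κ. For each non-diagonal element [a]_𝒟 ∈ A^* there are at least 2^{2^{ℵ0}}-many ultrafilters u_α ∈ Uf(A) (α < 2^{2^{ℵ0}}) such that ⟨u_α⟩^ω_{S^ue} ≅_P ⟨[a]_𝒟⟩^ω_{S^*} for every α, and ⟨u_α⟩^ω_{S^ue} ≠ ⟨u_β⟩^ω_{S^ue} for α ≠ β. -/

import Mathlib

open FirstOrder Cardinal

namespace UEx

/-- Elements of infinite in- or out-degree. -/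
def RInf (R : A → A → Prop) : Set A :=
  {w | {v | R w v}.Infinite ∨ {v | R v w}.Infinite}

/-- A uniform finite bound on all in- and out-degrees. -/
def Bounded (R : A → A → Prop) : Prop :=
  ∃ n : ℕ, ∀ w : A, {v | R w v}.Finite ∧ {v | R v w}.Finite ∧
    {v | R w v}.ncard ≤ n ∧ {v | R v w}.ncard ≤ n

/-- Almost bounded: finitely many elements of infinite degree, and a uniform
finite bound on the degrees of the remaining elements. -/
def AlmostBounded (R : A → A → Prop) : Prop :=
  (RInf R).Finite ∧ ∃ n : ℕ, ∀ w ∉ RInf R,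
    {v | R w v}.ncard ≤ n ∧ {v | R v w}.ncard ≤ n

/-- P = {(s,t) ∈ R : s ∈ R∞ or t ∈ R∞}. -/
def PRel (R : A → A → Prop) (s t : A) : Prop := R s t ∧ (s ∈ RInf R ∨ t ∈ RInf R)

/-- S = R \ P. -/
def SRel (R : A → A → Prop) (s t : A) : Prop := R s t ∧ ¬(s ∈ RInf R ∨ t ∈ RInf R)

/-- The ultrafilter extension of a binary relation. -/
def ueRel (Q : A → A → Prop) (u v : Ultrafilter A) : Prop :=
  ∀ X ∈ v, {w | ∃ s ∈ X, Q w s} ∈ u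

/-- The setoid of 𝒟-a.e. equality on `I → A`. -/
def upSetoid (𝒟 : Ultrafilter I) (A : Type*) : Setoid (I → A) where
  r a b := {i | a i = b i} ∈ 𝒟
  iseqv := by
    refine ⟨fun a => ?_, fun {a b} h => ?_, fun {a b c} h1 h2 => ?_⟩
    · have : {i | a i = a i} = (Set.univ : Set I) := by simp
      rw [this]
      exact Filter.univ_mem
    · exact Filter.mem_of_superset h fun i hi => (hi : _ = _).symm
    · exact Filter.mem_of_superset (Filter.inter_mem h1 h2) fun i hi =>
        (hi.1 : _ = _).trans hi.2

/-- The ultrapower of `A` modulo the ultrafilter `𝒟`. -/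
def UP (𝒟 : Ultrafilter I) (A : Type*) : Type _ := Quotient (upSetoid 𝒟 A)

/-- The diagonal embedding into the ultrapower. -/
def diag (𝒟 : Ultrafilter I) (a : A) : UP 𝒟 A := Quotient.mk (upSetoid 𝒟 A) fun _ => a

/-- The relation on the ultrapower given by Łoś's theorem. -/
def upRel (𝒟 : Ultrafilter I) (Q : A → A → Prop) : UP 𝒟 A → UP 𝒟 A → Prop :=
  Quotient.lift₂ (fun a b => {i | Q (a i) (b i)} ∈ 𝒟) <| by
    intro a b a' b' ha hb
    have ha' : {i | a i = a' i} ∈ 𝒟 := ha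
    have hb' : {i | b i = b' i} ∈ 𝒟 := hb
    refine propext ⟨fun h => ?_, fun h => ?_⟩
    · refine Filter.mem_of_superset (Filter.inter_mem (Filter.inter_mem h ha') hb') ?_
      rintro i ⟨⟨h1, h2⟩, h3⟩
      simp only [Set.mem_setOf_eq] at *
      rw [← h2, ← h3]; exact h1
    · refine Filter.mem_of_superset (Filter.inter_mem (Filter.inter_mem h ha') hb') ?_
      rintro i ⟨⟨h1, h2⟩, h3⟩
      simp only [Set.mem_setOf_eq] at *
      rw [h2, h3]; exact h1

/-- `𝒟` is `κ`-regular. -/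
def IsRegular (𝒟 : Ultrafilter I) (κ : Cardinal) : Prop :=
  ∃ E : Set (Set I), (∀ X ∈ E, X ∈ 𝒟) ∧ #E = κ ∧ ∀ i : I, {X ∈ E | i ∈ X}.Finite

/-- The set of elements reachable from `w` in at most `n` steps along `Q ∪ Q⁻¹`. -/
def nbhd (Q : B → B → Prop) (w : B) : ℕ → Set B
  | 0 => {w}
  | n + 1 => nbhd Q w n ∪ {v | ∃ x ∈ nbhd Q w n, Q x v ∨ Q v x}

/-- The ω-neighborhood of `w` along `Q ∪ Q⁻¹`. -/
def onbhd (Q : B → B → Prop) (w : B) : Set B := ⋃ n, nbhd Q w n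

/-- A `P`-isomorphism between the substructure of `B` on `sB` (with relation `SB`,
base point `b`) and the substructure of `C` on `sC` (with relation `SC`, base point `c`),
compatible with the `P`-connections to the elements of `Rinf`. -/
def IsPIsoOn {A B C : Type*} (Rinf : Set A)
    (SB : B → B → Prop) (PBr : B → A → Prop) (PBl : A → B → Prop)
    (SC : C → C → Prop) (PCr : C → A → Prop) (PCl : A → C → Prop)
    (sB : Set B) (sC : Set C) (b : B) (c : C) : Prop :=
  ∃ f : sB ≃ sC,
    (∀ (hb : b ∈ sB) (hc : c ∈ sC), f ⟨b, hb⟩ = ⟨c, hc⟩) ∧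
    (∀ x y : sB, SB x y ↔ SC (f x) (f y)) ∧
    (∀ x : sB, ∀ t ∈ Rinf, (PBr x t ↔ PCr (f x) t) ∧ (PBl t x ↔ PCl t (f x)))

/-- `P`-isomorphism of neighborhoods, both taken inside the ultrafilter extension
(elements `t` of `R_∞` are identified with the principal ultrafilters `π_t`). -/
def PIsoUeUe {A : Type*} (R : A → A → Prop)
    (sB sC : Set (Ultrafilter A)) (b c : Ultrafilter A) : Prop :=
  IsPIsoOn (RInf R)
    (ueRel (SRel R)) (fun x t => ueRel (PRel R) x (pure t)) (fun t x => ueRel (PRel R) (pure t) x)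
    (ueRel (SRel R)) (fun x t => ueRel (PRel R) x (pure t)) (fun t x => ueRel (PRel R) (pure t) x)
    sB sC b c

/-- `P`-isomorphism of a neighborhood in the ultrafilter extension with
a neighborhood in the original structure. -/
def PIsoUeA {A : Type*} (R : A → A → Prop)
    (sB : Set (Ultrafilter A)) (sC : Set A) (b : Ultrafilter A) (c : A) : Prop :=
  IsPIsoOn (RInf R)
    (ueRel (SRel R)) (fun x t => ueRel (PRel R) x (pure t)) (fun t x => ueRel (PRel R) (pure t) x)
    (SRel R) (fun x t => PRel R x t) (fun t x => PRel R t x)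
    sB sC b c

/-- `P`-isomorphism of a neighborhood in the ultrafilter extension with
a neighborhood in the ultrapower (elements `t` of `R_∞` are identified with
the principal ultrafilter `π_t`, resp. with the diagonal image of `t`). -/
def PIsoUeUp {A I : Type*} (R : A → A → Prop) (𝒟 : Ultrafilter I)
    (sB : Set (Ultrafilter A)) (sC : Set (UP 𝒟 A)) (b : Ultrafilter A) (c : UP 𝒟 A) : Prop :=
  IsPIsoOn (RInf R)
    (ueRel (SRel R)) (fun x t => ueRel (PRel R) x (pure t)) (fun t x => ueRel (PRel R) (pure t) x)
    (upRel 𝒟 (SRel R)) (fun x t => upRel 𝒟 (PRel R) x (diag 𝒟 t)) (fun t x => upRel 𝒟 (PRel R) (diag 𝒟 t) x)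
    sB sC b c

/-- `P`-isomorphism of neighborhoods, both taken inside the ultrapower. -/
def PIsoUpUp {A I : Type*} (R : A → A → Prop) (𝒟 : Ultrafilter I)
    (sB sC : Set (UP 𝒟 A)) (b c : UP 𝒟 A) : Prop :=
  IsPIsoOn (RInf R)
    (upRel 𝒟 (SRel R)) (fun x t => upRel 𝒟 (PRel R) x (diag 𝒟 t)) (fun t x => upRel 𝒟 (PRel R) (diag 𝒟 t) x)
    (upRel 𝒟 (SRel R)) (fun x t => upRel 𝒟 (PRel R) x (diag 𝒟 t)) (fun t x => upRel 𝒟 (PRel R) (diag 𝒟 t) x)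
    sB sC b c
section Aux

open Set

variable {A : Type*} {I : Type*}

theorem map_eq_map_of_mem (u : Ultrafilter A) {F G : A → A} (h : {w | F w = G w} ∈ u) :
    u.map F = u.map G := by
  ext X
  simp only [Ultrafilter.mem_map]
  constructor
  · intro hX
    refine Filter.mem_of_superset (Filter.inter_mem hX h) ?_
    rintro w ⟨h1, h2⟩
    simp only [Set.mem_setOf_eq] at h2
    simpa [Set.mem_preimage, ← h2] using h1
  · intro hX
    refine Filter.mem_of_superset (Filter.inter_mem hX h) ?_
    rintro w ⟨h1, h2⟩
    simp only [Set.mem_setOf_eq] at h2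
    simpa [Set.mem_preimage, h2] using h1

theorem ueRel_map (S : A → A → Prop) (u : Ultrafilter A) {F G : A → A}
    (h : {w | S (F w) (G w)} ∈ u) : ueRel S (u.map F) (u.map G) := by
  intro X hX
  rw [Ultrafilter.mem_map] at hX ⊢
  filter_upwards [hX, h] with w h1 h2
  exact ⟨G w, h1, h2⟩

theorem ueRel_pure_right (P : A → A → Prop) (v : Ultrafilter A) (t : A) :
    ueRel P v (pure t) ↔ {w | P w t} ∈ v := by
  constructor
  · intro h
    have := h {t} (by simp)
    simpa using this
  · intro h X hX
    rw [Ultrafilter.mem_pure] at hX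
    exact Filter.mem_of_superset h fun w hw => ⟨t, hX, hw⟩

theorem ueRel_pure_left (P : A → A → Prop) (v : Ultrafilter A) (t : A) :
    ueRel P (pure t) v ↔ {s | P t s} ∈ v := by
  constructor
  · intro h
    by_contra hc
    have hcc : {s | P t s}ᶜ ∈ v := (Ultrafilter.compl_mem_iff_notMem).2 hc
    have h2 := h _ hcc
    rw [Ultrafilter.mem_pure] at h2
    obtain ⟨s, hs, hPs⟩ := h2
    exact hs hPs
  · intro h X hX
    rw [Ultrafilter.mem_pure]
    obtain ⟨s, hsX, hsP⟩ := Ultrafilter.nonempty_of_mem (Filter.inter_mem hX h)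
    exact ⟨s, hsX, hsP⟩

/-- Membership in the ultrapower relation on representatives. -/
theorem upRel_mk (𝒟 : Ultrafilter I) (Q : A → A → Prop) (y z : I → A) :
    upRel 𝒟 Q (Quotient.mk (upSetoid 𝒟 A) y) (Quotient.mk (upSetoid 𝒟 A) z) ↔
      {i | Q (y i) (z i)} ∈ 𝒟 := Iff.rfl

theorem up_mk_eq (𝒟 : Ultrafilter I) (y z : I → A) (h : {i | y i = z i} ∈ 𝒟) :
    Quotient.mk (upSetoid 𝒟 A) y = Quotient.mk (upSetoid 𝒟 A) z := Quotient.sound h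

theorem up_mk_eq_iff (𝒟 : Ultrafilter I) (y z : I → A) :
    Quotient.mk (upSetoid 𝒟 A) y = Quotient.mk (upSetoid 𝒟 A) z ↔ {i | y i = z i} ∈ 𝒟 :=
  ⟨fun h => Quotient.exact h, fun h => Quotient.sound h⟩

section EV

variable (R : A → A → Prop) {N : ℕ} (e e' : A → Fin N → A)

/-- Iterated application of the selector functions along a list of instructions. -/
def ev : List (Bool × Fin N) → A → A
  | [], w => w
  | ((true, j) :: L), w => e (ev L w) j
  | ((false, j) :: L), w => e' (ev L w) j

/-- The set of points where the whole path described by `L` consists of genuine `S`-steps. -/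
def econd : List (Bool × Fin N) → Set A
  | [] => Set.univ
  | ((true, j) :: L) => econd L ∩ {w | SRel R (ev e e' L w) (e (ev e e' L w) j)}
  | ((false, j) :: L) => econd L ∩ {w | SRel R (e' (ev e e' L w) j) (ev e e' L w)}

variable {R e e'}

theorem econd_cons_subset (s : Bool × Fin N) (L : List (Bool × Fin N)) :
    econd R e e' (s :: L) ⊆ econd R e e' L := by
  obtain ⟨b, j⟩ := s
  cases b <;> exact Set.inter_subset_left

theorem ev_fiber_finite
    (hS : ∀ w : A, {v | SRel R w v}.Finite ∧ {v | SRel R v w}.Finite)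
    (he2 : ∀ w j, SRel R w (e w j) ∨ e w j = w)
    (he2' : ∀ w j, SRel R (e' w j) w ∨ e' w j = w) :
    ∀ (L : List (Bool × Fin N)) (K : Set A), K.Finite → (ev e e' L ⁻¹' K).Finite := by
  intro L
  induction L with
  | nil => intro K hK; exact hK
  | cons s L ih =>
    intro K hK
    obtain ⟨b, j⟩ := s
    have hstep : ∀ (g : A → A), (∀ w, SRel R w (g w) ∨ SRel R (g w) w ∨ g w = w) →
        (g ⁻¹' K).Finite := by
      intro g hg
      have hsub : g ⁻¹' K ⊆ ⋃ v ∈ K, ({w | SRel R w v} ∪ {w | SRel R v w} ∪ {v}) := by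
        intro w hw
        rcases hg w with h | h | h
        · exact Set.mem_biUnion hw (Or.inl (Or.inl h))
        · exact Set.mem_biUnion hw (Or.inl (Or.inr h))
        · refine Set.mem_biUnion hw (Or.inr ?_)
          simp only [Set.mem_singleton_iff]
          exact h.symm
      refine Set.Finite.subset ?_ hsub
      exact hK.biUnion fun v _ => (((hS v).2.union (hS v).1).union (Set.finite_singleton v))
    cases b
    · have : ev e e' ((false, j) :: L) ⁻¹' K = ev e e' L ⁻¹' ((fun w => e' w j) ⁻¹' K) := rfl
      rw [this]
      refine ih _ (hstep _ fun w => ?_)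
      rcases he2' w j with h | h
      · exact Or.inr (Or.inl h)
      · exact Or.inr (Or.inr h)
    · have : ev e e' ((true, j) :: L) ⁻¹' K = ev e e' L ⁻¹' ((fun w => e w j) ⁻¹' K) := rfl
      rw [this]
      refine ih _ (hstep _ fun w => ?_)
      rcases he2 w j with h | h
      · exact Or.inl h
      · exact Or.inr (Or.inr h)

end EV

end Aux
section Aux2

open Set

variable {A : Type*} {I : Type*} {R : A → A → Prop} {N : ℕ} {e e' : A → Fin N → A}

/-- Every `S^ue`-successor of an ultrafilter is the pushforward along a selector. -/
theorem ue_succ (he1 : ∀ w v, SRel R w v → ∃ j, e w j = v)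
    (p q : Ultrafilter A) (h : ueRel (SRel R) p q) :
    ∃ j, {w | SRel R w (e w j)} ∈ p ∧ q = p.map (fun w => e w j) := by
  by_contra hc
  push_neg at hc
  have key : ∀ j : Fin N, ∃ YC : Set A × Set A, YC.1 ∈ q ∧ YC.2 ∈ p ∧
      ∀ w ∈ YC.2, e w j ∈ YC.1 → ¬ SRel R w (e w j) := by
    intro j
    by_cases hq : q = p.map (fun w => e w j)
    · have hnot : {w | SRel R w (e w j)} ∉ p := fun hmem => hc j hmem hq
      refine ⟨(Set.univ, {w | SRel R w (e w j)}ᶜ), Filter.univ_mem,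
        Ultrafilter.compl_mem_iff_notMem.2 hnot, fun w hw _ => hw⟩
    · have hY : ∃ Y : Set A, Y ∈ q ∧ Y ∉ p.map (fun w => e w j) := by
        by_contra hno
        push_neg at hno
        exact hq (Ultrafilter.coe_le_coe.1 fun s hs => hno s hs).symm
      obtain ⟨Y, hYq, hYm⟩ := hY
      have hpre : ((fun w => e w j) ⁻¹' Y)ᶜ ∈ p :=
        Ultrafilter.compl_mem_iff_notMem.2 (fun hx => hYm (Ultrafilter.mem_map.2 hx))
      exact ⟨(Y, ((fun w => e w j) ⁻¹' Y)ᶜ), hYq, hpre, fun w hw hew => absurd hew hw⟩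
  choose f hf1 hf2 hf3 using key
  have hX : (⋂ j, (f j).1) ∈ q := Filter.iInter_mem.2 hf1
  have hSX := h _ hX
  have hW : ({w | ∃ s ∈ ⋂ j, (f j).1, SRel R w s} ∩ ⋂ j, (f j).2) ∈ p :=
    Filter.inter_mem hSX (Filter.iInter_mem.2 hf2)
  obtain ⟨w, ⟨⟨s, hsX, hsS⟩, hwC⟩⟩ := Ultrafilter.nonempty_of_mem hW
  obtain ⟨j, hj⟩ := he1 w s hsS
  have h1 : w ∈ (f j).2 := Set.mem_iInter.1 hwC j
  have h2 : e w j ∈ (f j).1 := by rw [hj]; exact Set.mem_iInter.1 hsX j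
  exact hf3 j w h1 h2 (by rw [hj]; exact hsS)

/-- Every `S^ue`-predecessor of an ultrafilter is the pushforward along a selector. -/
theorem ue_pred (he1' : ∀ w v, SRel R v w → ∃ j, e' w j = v)
    (p q : Ultrafilter A) (h : ueRel (SRel R) q p) :
    ∃ j, {w | SRel R (e' w j) w} ∈ p ∧ q = p.map (fun w => e' w j) := by
  by_contra hc
  push_neg at hc
  have key : ∀ j : Fin N, ∃ CZ : Set A × Set A, CZ.1 ∈ p ∧ CZ.2 ∈ q ∧
      ∀ s ∈ CZ.1, e' s j ∈ CZ.2 → ¬ SRel R (e' s j) s := by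
    intro j
    by_cases hq : q = p.map (fun w => e' w j)
    · have hnot : {w | SRel R (e' w j) w} ∉ p := fun hmem => hc j hmem hq
      refine ⟨({w | SRel R (e' w j) w}ᶜ, Set.univ), Ultrafilter.compl_mem_iff_notMem.2 hnot,
        Filter.univ_mem, fun s hs _ => hs⟩
    · have hY : ∃ Y : Set A, Y ∈ p.map (fun w => e' w j) ∧ Y ∉ q := by
        by_contra hno
        push_neg at hno
        exact hq (Ultrafilter.coe_le_coe.1 fun s hs => hno s hs)
      obtain ⟨Y, hYm, hYq⟩ := hY
      refine ⟨((fun w => e' w j) ⁻¹' Y, Yᶜ), Ultrafilter.mem_map.1 hYm,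
        Ultrafilter.compl_mem_iff_notMem.2 hYq, fun s hs hes => absurd hs hes⟩
  choose f hf1 hf2 hf3 using key
  have hX : (⋂ j, (f j).1) ∈ p := Filter.iInter_mem.2 hf1
  have hSX := h _ hX
  have hW : ({w | ∃ s ∈ ⋂ j, (f j).1, SRel R w s} ∩ ⋂ j, (f j).2) ∈ q :=
    Filter.inter_mem hSX (Filter.iInter_mem.2 hf2)
  obtain ⟨z, ⟨⟨s, hsX, hsS⟩, hzC⟩⟩ := Ultrafilter.nonempty_of_mem hW
  obtain ⟨j, hj⟩ := he1' s z hsS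
  have h1 : s ∈ (f j).1 := Set.mem_iInter.1 hsX j
  have h2 : e' s j ∈ (f j).2 := by rw [hj]; exact Set.mem_iInter.1 hzC j
  exact hf3 j s h1 h2 (by rw [hj]; exact hsS)

/-- Łoś-style successor lemma in the ultrapower. -/
theorem up_succ (𝒟 : Ultrafilter I) (he1 : ∀ w v, SRel R w v → ∃ j, e w j = v)
    (y z : I → A) (h : {i | SRel R (y i) (z i)} ∈ 𝒟) :
    ∃ j, {i | z i = e (y i) j ∧ SRel R (y i) (e (y i) j)} ∈ 𝒟 := by
  by_contra hc
  push_neg at hc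
  have hcompl : (⋂ j : Fin N, {i | z i = e (y i) j ∧ SRel R (y i) (e (y i) j)}ᶜ) ∈ 𝒟 :=
    Filter.iInter_mem.2 fun j => Ultrafilter.compl_mem_iff_notMem.2 (hc j)
  obtain ⟨i, hiS, hiC⟩ := Ultrafilter.nonempty_of_mem (Filter.inter_mem h hcompl)
  obtain ⟨j, hj⟩ := he1 _ _ hiS
  exact (Set.mem_iInter.1 hiC j) ⟨hj.symm, by rw [hj]; exact hiS⟩

/-- Łoś-style predecessor lemma in the ultrapower. -/
theorem up_pred (𝒟 : Ultrafilter I) (he1' : ∀ w v, SRel R v w → ∃ j, e' w j = v)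
    (y z : I → A) (h : {i | SRel R (z i) (y i)} ∈ 𝒟) :
    ∃ j, {i | z i = e' (y i) j ∧ SRel R (e' (y i) j) (y i)} ∈ 𝒟 := by
  by_contra hc
  push_neg at hc
  have hcompl : (⋂ j : Fin N, {i | z i = e' (y i) j ∧ SRel R (e' (y i) j) (y i)}ᶜ) ∈ 𝒟 :=
    Filter.iInter_mem.2 fun j => Ultrafilter.compl_mem_iff_notMem.2 (hc j)
  obtain ⟨i, hiS, hiC⟩ := Ultrafilter.nonempty_of_mem (Filter.inter_mem h hcompl)
  obtain ⟨j, hj⟩ := he1' _ _ hiS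
  exact (Set.mem_iInter.1 hiC j) ⟨hj.symm, by rw [hj]; exact hiS⟩

end Aux2
section Aux3

open Set

variable {A : Type*} {I : Type*} {R : A → A → Prop} {N : ℕ} {e e' : A → Fin N → A}

theorem ue_nbhd_sub (he1 : ∀ w v, SRel R w v → ∃ j, e w j = v)
    (he1' : ∀ w v, SRel R v w → ∃ j, e' w j = v) (u : Ultrafilter A) :
    ∀ m, ∀ v ∈ nbhd (ueRel (SRel R)) u m,
      ∃ L, econd R e e' L ∈ u ∧ v = u.map (ev e e' L) := by
  intro m
  induction m with
  | zero =>
    intro v hv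
    refine ⟨[], Filter.univ_mem, ?_⟩
    have : v = u := hv
    rw [this, show ev e e' ([] : List (Bool × Fin N)) = id from rfl, Ultrafilter.map_id]
  | succ m ih =>
    intro v hv
    rcases hv with hv | hv
    · exact ih v hv
    · obtain ⟨y, hy, hrel⟩ := hv
      obtain ⟨L, hLc, hLy⟩ := ih y hy
      rcases hrel with hrel | hrel
      · obtain ⟨j, hj1, hj2⟩ := ue_succ he1 y v hrel
        refine ⟨(true, j) :: L, ?_, ?_⟩
        · refine Filter.inter_mem hLc ?_
          have : {w | SRel R w (e w j)} ∈ u.map (ev e e' L) := by rw [← hLy]; exact hj1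
          exact Ultrafilter.mem_map.1 this
        · rw [hj2, hLy, Ultrafilter.map_map]
          rfl
      · obtain ⟨j, hj1, hj2⟩ := ue_pred he1' y v hrel
        refine ⟨(false, j) :: L, ?_, ?_⟩
        · refine Filter.inter_mem hLc ?_
          have : {w | SRel R (e' w j) w} ∈ u.map (ev e e' L) := by rw [← hLy]; exact hj1
          exact Ultrafilter.mem_map.1 this
        · rw [hj2, hLy, Ultrafilter.map_map]
          rfl

theorem ue_nbhd_sup (u : Ultrafilter A) :
    ∀ L : List (Bool × Fin N), econd R e e' L ∈ u →
      u.map (ev e e' L) ∈ onbhd (ueRel (SRel R)) u := by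
  intro L
  induction L with
  | nil =>
    intro _
    refine Set.mem_iUnion.2 ⟨0, ?_⟩
    show u.map (ev e e' []) ∈ ({u} : Set (Ultrafilter A))
    rw [show ev e e' ([] : List (Bool × Fin N)) = id from rfl, Ultrafilter.map_id]
    rfl
  | cons s L ih =>
    intro hc
    have hcL : econd R e e' L ∈ u := Filter.mem_of_superset hc (econd_cons_subset s L)
    obtain ⟨m, hm⟩ := Set.mem_iUnion.1 (ih hcL)
    refine Set.mem_iUnion.2 ⟨m + 1, Or.inr ⟨u.map (ev e e' L), hm, ?_⟩⟩
    obtain ⟨b, j⟩ := s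
    have hstep : econd R e e' ((b, j) :: L) ⊆
        (if b then {w | SRel R (ev e e' L w) (e (ev e e' L w) j)}
         else {w | SRel R (e' (ev e e' L w) j) (ev e e' L w)}) := by
      cases b <;> simp [econd]
    cases b
    · right
      have hmem : {w | SRel R (e' (ev e e' L w) j) (ev e e' L w)} ∈ u :=
        Filter.mem_of_superset hc (by simpa using hstep)
      have := ueRel_map (SRel R) u (F := ev e e' ((false, j) :: L)) (G := ev e e' L) hmem
      exact this
    · left
      have hmem : {w | SRel R (ev e e' L w) (e (ev e e' L w) j)} ∈ u :=
        Filter.mem_of_superset hc (by simpa using hstep)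
      have := ueRel_map (SRel R) u (F := ev e e' L) (G := ev e e' ((true, j) :: L)) hmem
      exact this

theorem up_nbhd_sub (𝒟 : Ultrafilter I) (he1 : ∀ w v, SRel R w v → ∃ j, e w j = v)
    (he1' : ∀ w v, SRel R v w → ∃ j, e' w j = v) (x : I → A) :
    ∀ m, ∀ z ∈ nbhd (upRel 𝒟 (SRel R)) (Quotient.mk (upSetoid 𝒟 A) x) m,
      ∃ L, x ⁻¹' econd R e e' L ∈ 𝒟 ∧
        z = Quotient.mk (upSetoid 𝒟 A) (fun i => ev e e' L (x i)) := by
  intro m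
  induction m with
  | zero =>
    intro z hz
    exact ⟨[], by simp only [econd, Set.preimage_univ]; exact Filter.univ_mem, hz⟩
  | succ m ih =>
    intro z hz
    rcases hz with hz | hz
    · exact ih z hz
    · obtain ⟨y, hy, hrel⟩ := hz
      obtain ⟨L, hLc, hLy⟩ := ih y hy
      obtain ⟨zf, hzf⟩ := Quotient.exists_rep z
      rcases hrel with hrel | hrel
      · rw [hLy, ← hzf] at hrel
        rw [upRel_mk] at hrel
        obtain ⟨j, hj⟩ := up_succ 𝒟 he1 _ _ hrel
        refine ⟨(true, j) :: L, ?_, ?_⟩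
        · have : x ⁻¹' econd R e e' ((true, j) :: L) =
              x ⁻¹' econd R e e' L ∩ {i | SRel R (ev e e' L (x i)) (e (ev e e' L (x i)) j)} := rfl
          rw [this]
          exact Filter.inter_mem hLc (Filter.mem_of_superset hj fun i hi => hi.2)
        · rw [← hzf]
          refine up_mk_eq 𝒟 _ _ (Filter.mem_of_superset hj fun i hi => ?_)
          exact hi.1
      · rw [hLy, ← hzf] at hrel
        rw [upRel_mk] at hrel
        obtain ⟨j, hj⟩ := up_pred 𝒟 he1' _ _ hrel
        refine ⟨(false, j) :: L, ?_, ?_⟩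
        · have : x ⁻¹' econd R e e' ((false, j) :: L) =
              x ⁻¹' econd R e e' L ∩ {i | SRel R (e' (ev e e' L (x i)) j) (ev e e' L (x i))} := rfl
          rw [this]
          exact Filter.inter_mem hLc (Filter.mem_of_superset hj fun i hi => hi.2)
        · rw [← hzf]
          refine up_mk_eq 𝒟 _ _ (Filter.mem_of_superset hj fun i hi => hi.1)

theorem up_nbhd_sup (𝒟 : Ultrafilter I) (x : I → A) :
    ∀ L : List (Bool × Fin N), x ⁻¹' econd R e e' L ∈ 𝒟 →
      Quotient.mk (upSetoid 𝒟 A) (fun i => ev e e' L (x i)) ∈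
        onbhd (upRel 𝒟 (SRel R)) (Quotient.mk (upSetoid 𝒟 A) x) := by
  intro L
  induction L with
  | nil =>
    intro _
    exact Set.mem_iUnion.2 ⟨0, rfl⟩
  | cons s L ih =>
    intro hc
    have hcL : x ⁻¹' econd R e e' L ∈ 𝒟 :=
      Filter.mem_of_superset hc (fun i hi => econd_cons_subset s L hi)
    obtain ⟨m, hm⟩ := Set.mem_iUnion.1 (ih hcL)
    refine Set.mem_iUnion.2 ⟨m + 1, Or.inr ⟨_, hm, ?_⟩⟩
    obtain ⟨b, j⟩ := s
    cases b
    · right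
      rw [upRel_mk]
      refine Filter.mem_of_superset hc fun i hi => ?_
      exact hi.2
    · left
      rw [upRel_mk]
      refine Filter.mem_of_superset hc fun i hi => ?_
      exact hi.2

end Aux3
section Aux4

open Set

variable {A : Type*} {I : Type*}

theorem good_iso (R : A → A → Prop) (𝒟 : Ultrafilter I) {N : ℕ} {e e' : A → Fin N → A}
    (he1 : ∀ w v, SRel R w v → ∃ j, e w j = v)
    (he1' : ∀ w v, SRel R v w → ∃ j, e' w j = v)
    (x : I → A) (u : Ultrafilter A)
    (T1c : ∀ L : List (Bool × Fin N), econd R e e' L ∈ u ↔ x ⁻¹' econd R e e' L ∈ 𝒟)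
    (T1E : ∀ L L' : List (Bool × Fin N),
      ({w | ev e e' L w = ev e e' L' w} ∈ u ↔
        {i | ev e e' L (x i) = ev e e' L' (x i)} ∈ 𝒟))
    (T1S : ∀ L L' : List (Bool × Fin N),
      ({w | SRel R (ev e e' L w) (ev e e' L' w)} ∈ u ↔
        {i | SRel R (ev e e' L (x i)) (ev e e' L' (x i))} ∈ 𝒟))
    (T1Pr : ∀ (L : List (Bool × Fin N)) (t : A), t ∈ RInf R →
      ({w | PRel R (ev e e' L w) t} ∈ u ↔ {i | PRel R (ev e e' L (x i)) t} ∈ 𝒟))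
    (T1Pl : ∀ (L : List (Bool × Fin N)) (t : A), t ∈ RInf R →
      ({w | PRel R t (ev e e' L w)} ∈ u ↔ {i | PRel R t (ev e e' L (x i))} ∈ 𝒟))
    (T2 : ∀ L L' : List (Bool × Fin N),
      u.map (ev e e' L) = u.map (ev e e' L') → {w | ev e e' L w = ev e e' L' w} ∈ u) :
    PIsoUeUp R 𝒟 (onbhd (ueRel (SRel R)) u)
      (onbhd (upRel 𝒟 (SRel R)) (Quotient.mk (upSetoid 𝒟 A) x))
      u (Quotient.mk (upSetoid 𝒟 A) x) := by
  classical
  -- map equality transfer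
  have MEQ : ∀ L L' : List (Bool × Fin N), u.map (ev e e' L) = u.map (ev e e' L') ↔
      Quotient.mk (upSetoid 𝒟 A) (fun i => ev e e' L (x i)) =
        Quotient.mk (upSetoid 𝒟 A) (fun i => ev e e' L' (x i)) := by
    intro L L'
    rw [up_mk_eq_iff]
    constructor
    · intro h
      exact (T1E L L').1 (T2 L L' h)
    · intro h
      exact map_eq_map_of_mem u ((T1E L L').2 h)
  -- S-relation transfer
  have MS : ∀ L L' : List (Bool × Fin N),
      ueRel (SRel R) (u.map (ev e e' L)) (u.map (ev e e' L')) ↔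
        upRel 𝒟 (SRel R) (Quotient.mk (upSetoid 𝒟 A) (fun i => ev e e' L (x i)))
          (Quotient.mk (upSetoid 𝒟 A) (fun i => ev e e' L' (x i))) := by
    intro L L'
    rw [upRel_mk]
    constructor
    · intro h
      obtain ⟨j, hj1, hj2⟩ := ue_succ he1 _ _ h
      have hmapeq : u.map (ev e e' ((true, j) :: L)) = u.map (ev e e' L') := by
        rw [show ev e e' ((true, j) :: L) = (fun w => e w j) ∘ ev e e' L from rfl,
          ← Ultrafilter.map_map, ← hj2]
      have hE := T2 _ _ hmapeq
      have hjm : {w | SRel R (ev e e' L w) (e (ev e e' L w) j)} ∈ u :=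
        Ultrafilter.mem_map.1 hj1
      have hSS : {w | SRel R (ev e e' L w) (ev e e' L' w)} ∈ u := by
        refine Filter.mem_of_superset (Filter.inter_mem hE hjm) ?_
        rintro w ⟨h1, h2⟩
        have : ev e e' ((true, j) :: L) w = e (ev e e' L w) j := rfl
        simp only [Set.mem_setOf_eq] at h1 h2 ⊢
        rw [← h1, this]
        exact h2
      exact (T1S L L').1 hSS
    · intro h
      exact ueRel_map (SRel R) u ((T1S L L').2 h)
  -- P-relation transfers
  have MPr : ∀ (L : List (Bool × Fin N)) (t : A), t ∈ RInf R →
      (ueRel (PRel R) (u.map (ev e e' L)) (pure t) ↔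
        upRel 𝒟 (PRel R) (Quotient.mk (upSetoid 𝒟 A) (fun i => ev e e' L (x i))) (diag 𝒟 t)) := by
    intro L t ht
    rw [ueRel_pure_right]
    have : diag 𝒟 t = Quotient.mk (upSetoid 𝒟 A) (fun _ => t) := rfl
    rw [this, upRel_mk]
    rw [Ultrafilter.mem_map]
    exact T1Pr L t ht
  have MPl : ∀ (L : List (Bool × Fin N)) (t : A), t ∈ RInf R →
      (ueRel (PRel R) (pure t) (u.map (ev e e' L)) ↔
        upRel 𝒟 (PRel R) (diag 𝒟 t) (Quotient.mk (upSetoid 𝒟 A) (fun i => ev e e' L (x i)))) := by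
    intro L t ht
    rw [ueRel_pure_left]
    have : diag 𝒟 t = Quotient.mk (upSetoid 𝒟 A) (fun _ => t) := rfl
    rw [this, upRel_mk]
    rw [Ultrafilter.mem_map]
    exact T1Pl L t ht
  -- selection functions
  have selB : ∀ v : Ultrafilter A, v ∈ onbhd (ueRel (SRel R)) u →
      ∃ L, econd R e e' L ∈ u ∧ v = u.map (ev e e' L) := by
    intro v hv
    obtain ⟨m, hm⟩ := Set.mem_iUnion.1 hv
    exact ue_nbhd_sub he1 he1' u m v hm
  have selC : ∀ z : UP 𝒟 A, z ∈ onbhd (upRel 𝒟 (SRel R)) (Quotient.mk (upSetoid 𝒟 A) x) →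
      ∃ L, x ⁻¹' econd R e e' L ∈ 𝒟 ∧
        z = Quotient.mk (upSetoid 𝒟 A) (fun i => ev e e' L (x i)) := by
    intro z hz
    obtain ⟨m, hm⟩ := Set.mem_iUnion.1 hz
    exact up_nbhd_sub 𝒟 he1 he1' x m z hm
  set sB := onbhd (ueRel (SRel R)) u with hsB
  set sC := onbhd (upRel 𝒟 (SRel R)) (Quotient.mk (upSetoid 𝒟 A) x) with hsC
  have hf : ∀ v : sB, (Quotient.mk (upSetoid 𝒟 A)
      (fun i => ev e e' ((selB v v.2).choose) (x i))) ∈ sC := by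
    intro v
    exact up_nbhd_sup 𝒟 x _ ((T1c _).1 (selB v v.2).choose_spec.1)
  have hg : ∀ z : sC, (u.map (ev e e' ((selC z z.2).choose))) ∈ sB := by
    intro z
    exact ue_nbhd_sup u _ ((T1c _).2 (selC z z.2).choose_spec.1)
  set F : sB → sC := fun v => ⟨_, hf v⟩ with hF
  set G : sC → sB := fun z => ⟨_, hg z⟩ with hG
  have hGF : Function.LeftInverse G F := by
    intro v
    apply Subtype.ext
    show u.map (ev e e' ((selC (F v) (F v).2).choose)) = (v : Ultrafilter A)
    have h1 : (Quotient.mk (upSetoid 𝒟 A)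
        (fun i => ev e e' ((selB v v.2).choose) (x i)) : UP 𝒟 A) =
        Quotient.mk (upSetoid 𝒟 A) (fun i => ev e e' ((selC (F v) (F v).2).choose) (x i)) :=
      (selC (F v) (F v).2).choose_spec.2
    have h2 := (selB v v.2).choose_spec.2
    exact ((MEQ _ _).2 h1.symm).trans h2.symm
  have hFG : Function.RightInverse G F := by
    intro z
    apply Subtype.ext
    show (Quotient.mk (upSetoid 𝒟 A)
      (fun i => ev e e' ((selB (G z) (G z).2).choose) (x i))) = (z : UP 𝒟 A)
    have h1 : u.map (ev e e' ((selC z z.2).choose)) =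
        u.map (ev e e' ((selB (G z) (G z).2).choose)) :=
      (selB (G z) (G z).2).choose_spec.2
    have h2 := (selC z z.2).choose_spec.2
    exact ((MEQ _ _).1 h1).symm.trans h2.symm
  unfold PIsoUeUp IsPIsoOn
  refine ⟨⟨F, G, hGF, hFG⟩, ?_, ?_, ?_⟩
  · -- base point
    intro hb hc
    apply Subtype.ext
    show (Quotient.mk (upSetoid 𝒟 A)
      (fun i => ev e e' ((selB u hb).choose) (x i))) = Quotient.mk (upSetoid 𝒟 A) x
    have h2 := (selB u hb).choose_spec.2
    have hid : u = u.map (ev e e' ([] : List (Bool × Fin N))) := by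
      rw [show ev e e' ([] : List (Bool × Fin N)) = id from rfl, Ultrafilter.map_id]
    exact (MEQ ((selB u hb).choose) []).1 (h2.symm.trans hid)
  · -- S-relation
    intro v w
    have h2v := (selB v v.2).choose_spec.2
    have h2w := (selB w w.2).choose_spec.2
    constructor
    · intro hh
      rw [h2v, h2w] at hh
      exact (MS _ _).1 hh
    · intro hh
      rw [h2v, h2w]
      exact (MS _ _).2 hh
  · -- P-relations
    intro v t ht
    have h2v := (selB v v.2).choose_spec.2
    constructor
    · constructor
      · intro hh
        rw [h2v] at hh
        exact (MPr _ t ht).1 hh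
      · intro hh
        rw [h2v]
        exact (MPr _ t ht).2 hh
    · constructor
      · intro hh
        rw [h2v] at hh
        exact (MPl _ t ht).1 hh
      · intro hh
        rw [h2v]
        exact (MPl _ t ht).2 hh

end Aux4
section Aux5

open Set

variable {A : Type*} {I : Type*}

/-- A finite set of at most `n` elements can be covered by a function on `Fin (n+1)`. -/
theorem exists_cover {n : ℕ} (s : Set A) (hs : s.Finite) (hcard : s.ncard ≤ n) (w : A) :
    ∃ g : Fin (n + 1) → A, (∀ v ∈ s, ∃ j, g j = v) ∧ ∀ j, g j ∈ s ∨ g j = w := by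
  classical
  set l := hs.toFinset.toList with hl
  have hlen : l.length ≤ n := by
    rw [hl, Finset.length_toList, ← Set.ncard_eq_toFinset_card s hs]
    exact hcard
  have hmem : ∀ v, v ∈ l ↔ v ∈ s := by
    intro v
    rw [hl, Finset.mem_toList, Set.Finite.mem_toFinset]
  refine ⟨fun j => l.getD j w, ?_, ?_⟩
  · intro v hv
    obtain ⟨i, hi⟩ := List.mem_iff_get.1 ((hmem v).2 hv)
    refine ⟨⟨i, lt_of_lt_of_le i.2 (le_trans hlen (Nat.le_succ n))⟩, ?_⟩
    simp only
    rw [List.getD_eq_getElem l w (by simpa using i.2)]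
    simpa using hi
  · intro j
    by_cases hj : (j : ℕ) < l.length
    · left
      show l.getD (↑j) w ∈ s
      rw [List.getD_eq_getElem l w hj]
      exact (hmem _).1 (List.getElem_mem hj)
    · right
      show l.getD (↑j) w = w
      exact List.getD_eq_default l w (not_lt.1 hj)

/-- If `[x]` is not diagonal, every set whose preimage is 𝒟-large is infinite. -/
theorem nondiag_infinite (𝒟 : Ultrafilter I) (x : I → A)
    (ha : Quotient.mk (upSetoid 𝒟 A) x ∉ Set.range (diag 𝒟 : A → UP 𝒟 A))
    (B : Set A) (hB : x ⁻¹' B ∈ 𝒟) : B.Infinite := by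
  by_contra hfin
  rw [Set.not_infinite] at hfin
  have : (⋃ b ∈ B, x ⁻¹' {b}) ∈ 𝒟 := by
    rwa [Set.biUnion_preimage_singleton]
  obtain ⟨b, _, hb⟩ := (Ultrafilter.finite_biUnion_mem_iff hfin).1 this
  refine ha ⟨b, ?_⟩
  refine (up_mk_eq 𝒟 _ _ ?_).symm.trans rfl
  · refine Filter.mem_of_superset hb fun i hi => ?_
    exact hi

/-- Recursive choice of a sequence avoiding finitely many bad points at each step. -/
theorem exists_good_seq [Nonempty A] (G : ℕ → Set A) (hG : ∀ n, (G n).Infinite)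
    (fs : ℕ → A → A) (hfib : ∀ k (K : Set A), K.Finite → (fs k ⁻¹' K).Finite) :
    ∃ b : ℕ → A, ∀ n, b n ∈ G n ∧ (∀ m < n, b n ≠ b m) ∧
      ∀ k ≤ n, ∀ k' ≤ n, ∀ m < n, fs k (b n) ≠ fs k' (b m) := by
  classical
  have hbad : ∀ (n : ℕ) (hist : ℕ → A),
      (G n \ ((hist '' Set.Iio n) ∪
        ⋃ k ∈ Set.Iic n, fs k ⁻¹' (⋃ m ∈ Set.Iio n, ⋃ k' ∈ Set.Iic n, {fs k' (hist m)}))).Nonempty := by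
    intro n hist
    have hfin : ((hist '' Set.Iio n) ∪
        ⋃ k ∈ Set.Iic n, fs k ⁻¹' (⋃ m ∈ Set.Iio n, ⋃ k' ∈ Set.Iic n, {fs k' (hist m)})).Finite := by
      refine Set.Finite.union ((Set.finite_Iio n).image hist) ?_
      refine (Set.finite_Iic n).biUnion fun k _ => hfib k _ ?_
      exact (Set.finite_Iio n).biUnion fun m _ =>
        (Set.finite_Iic n).biUnion fun k' _ => Set.finite_singleton _
    exact ((hG n).diff hfin).nonempty
  set pick : ℕ → (ℕ → A) → A := fun n hist => (hbad n hist).choose with hpick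
  set Fh : ℕ → (ℕ → A) := fun n => Nat.rec (fun _ => Classical.arbitrary A)
    (fun n ih => Function.update ih n (pick n ih)) n with hFh
  set b : ℕ → A := fun n => Fh (n + 1) n with hb
  have hFh_succ : ∀ n, Fh (n + 1) = Function.update (Fh n) n (pick n (Fh n)) := fun n => rfl
  have coh : ∀ n m, m < n → Fh n m = b m := by
    intro n
    induction n with
    | zero => intro m hm; omega
    | succ n ih =>
      intro m hm
      rcases Nat.lt_succ_iff_lt_or_eq.1 hm with hm' | hm'
      · rw [hFh_succ n, Function.update_of_ne (by omega)]
        exact ih m hm'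
      · subst hm'
        rfl
  have hbn : ∀ n, b n = pick n (Fh n) := by
    intro n
    rw [hb]
    simp only
    rw [hFh_succ n, Function.update_self]
  refine ⟨b, fun n => ?_⟩
  have hmem := (hbad n (Fh n)).choose_spec
  have hmem2 : b n ∈ G n \ (Fh n '' Set.Iio n ∪
      ⋃ k ∈ Set.Iic n, fs k ⁻¹' (⋃ m ∈ Set.Iio n, ⋃ k' ∈ Set.Iic n, {fs k' (Fh n m)})) := by
    rw [hbn n]
    exact hmem
  obtain ⟨hG1, hG2⟩ := hmem2
  refine ⟨hG1, ?_, ?_⟩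
  · intro m hm hne
    refine hG2 (Or.inl ?_)
    exact ⟨m, hm, by rw [coh n m hm, hne]⟩
  · intro k hk k' hk' m hm hne
    refine hG2 (Or.inr ?_)
    refine Set.mem_biUnion hk ?_
    refine Set.mem_preimage.2 ?_
    refine Set.mem_biUnion hm ?_
    refine Set.mem_biUnion hk' ?_
    rw [coh n m hm]
    exact hne

end Aux5
section Aux6

open Set

/-- The base set for the independent family. -/
abbrev TT : Type := (Finset ℕ × Finset (Finset ℕ)) × ℕ

/-- The independent family of subsets of `TT`. -/
def AX (X : Set ℕ) : Set TT := {p | ∃ t ∈ p.1.2, (t : Set ℕ) = (p.1.1 : Set ℕ) ∩ X}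

theorem AX_injective : Function.Injective AX := by
  classical
  intro X Y hXY
  by_contra hne
  have : ∃ m, ¬ (m ∈ X ↔ m ∈ Y) := by
    by_contra hA
    push_neg at hA
    exact hne (Set.ext fun m => hA m)
  obtain ⟨m, hm⟩ := this
  have hX : ((({m} : Finset ℕ), ({({m} : Finset ℕ).filter (· ∈ X)} : Finset (Finset ℕ))), 0) ∈ AX X := by
    refine ⟨({m} : Finset ℕ).filter (· ∈ X), by simp, ?_⟩
    ext k
    simp [Finset.coe_filter]
  rw [hXY] at hX
  obtain ⟨t, ht, hteq⟩ := hX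
  simp only [Finset.mem_singleton] at ht
  subst ht
  apply hm
  constructor
  · intro hmX
    have : m ∈ (({m} : Finset ℕ).filter (· ∈ X) : Set ℕ) := by simp [hmX]
    rw [hteq] at this
    exact this.2
  · intro hmY
    have : m ∈ ((({m} : Finset ℕ) : Set ℕ) ∩ Y) := by simp [hmY]
    rw [← hteq] at this
    simp only [Finset.coe_filter, Set.mem_setOf_eq] at this
    exact this.2

/-- There exist `2^(2^ℵ₀)`-many ultrafilters on `TT`, all containing every cofinite set. -/
theorem exists_many_ultrafilters :
    ∃ Φ : Set (Set ℕ) → Ultrafilter TT, Function.Injective Φ ∧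
      ∀ F : Set (Set ℕ), ∀ s : Set TT, sᶜ.Finite → s ∈ Φ F := by
  classical
  -- generating family
  let C : Set (Set ℕ) → Set (Set TT) := fun F =>
    {s | ∃ X, (X ∈ F ∧ s = AX X) ∨ (X ∉ F ∧ s = (AX X)ᶜ)} ∪ {s | sᶜ.Finite}
  have hFIP : ∀ F, ∀ t ⊆ C F, t.Finite → (⋂₀ t).Nonempty := by
    intro F t hsub hfin
    -- the sets of "positive" and "negative" indices
    set P : Set (Set ℕ) := {X | X ∈ F ∧ AX X ∈ t} with hP
    set Nn : Set (Set ℕ) := {X | X ∉ F ∧ (AX X)ᶜ ∈ t} with hNn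
    have hPfin : P.Finite := by
      have : P ⊆ AX ⁻¹' t := fun X hX => hX.2
      exact Set.Finite.subset (hfin.preimage (AX_injective.injOn)) this
    have hNfin : Nn.Finite := by
      have hinj : Function.Injective (fun X => (AX X)ᶜ) := fun X Y hXY =>
        AX_injective (compl_injective hXY)
      have : Nn ⊆ (fun X => (AX X)ᶜ) ⁻¹' t := fun X hX => hX.2
      exact Set.Finite.subset (hfin.preimage hinj.injOn) this
    -- separating points
    have hd : ∀ X ∈ P, ∀ Y ∈ Nn, ∃ m, ¬ (m ∈ X ↔ m ∈ Y) := by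
      intro X hX Y hY
      by_contra hA
      push_neg at hA
      have : X = Y := Set.ext fun m => hA m
      exact hY.1 (this ▸ hX.1)
    set d : Set ℕ → Set ℕ → ℕ := fun X Y =>
      if h : ∃ m, ¬ (m ∈ X ↔ m ∈ Y) then h.choose else 0 with hdd
    set s₀ : Finset ℕ :=
      (hPfin.toFinset ×ˢ hNfin.toFinset).image (fun q => d q.1 q.2) with hs₀
    set F₀ : Finset (Finset ℕ) := hPfin.toFinset.image (fun X => s₀.filter (· ∈ X)) with hF₀
    -- trace separation
    have hsep : ∀ X ∈ P, ∀ Y ∈ Nn, ((s₀ : Set ℕ) ∩ X) ≠ ((s₀ : Set ℕ) ∩ Y) := by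
      intro X hX Y hY heq
      have hdm := hd X hX Y hY
      have hmem : d X Y ∈ s₀ := by
        rw [hs₀]
        refine Finset.mem_image.2 ⟨(X, Y), ?_, rfl⟩
        rw [Finset.mem_product]
        exact ⟨hPfin.mem_toFinset.2 hX, hNfin.mem_toFinset.2 hY⟩
      have hdspec : ¬ (d X Y ∈ X ↔ d X Y ∈ Y) := by
        rw [hdd]
        simp only [hdm, dif_pos]
        exact hdm.choose_spec
      apply hdspec
      constructor
      · intro hx
        have : d X Y ∈ (s₀ : Set ℕ) ∩ X := ⟨hmem, hx⟩
        rw [heq] at this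
        exact this.2
      · intro hy
        have : d X Y ∈ (s₀ : Set ℕ) ∩ Y := ⟨hmem, hy⟩
        rw [← heq] at this
        exact this.2
    -- the bad finite set coming from cofinite members of t
    set tc : Set (Set TT) := {s ∈ t | sᶜ.Finite} with htc
    have htcfin : (⋃ s ∈ tc, sᶜ).Finite :=
      Set.Finite.biUnion (hfin.subset (Set.sep_subset _ _)) fun s hs => hs.2
    -- choose k such that the witness avoids all complements
    have hwit : ∃ k : ℕ, ((s₀, F₀), k) ∉ ⋃ s ∈ tc, sᶜ := by
      by_contra hall
      push_neg at hall
      have hinj : Function.Injective (fun k : ℕ => (((s₀, F₀), k) : TT)) := by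
        intro k k' h
        simpa using congrArg Prod.snd h
      have : (Set.range fun k : ℕ => (((s₀, F₀), k) : TT)).Infinite :=
        Set.infinite_range_of_injective hinj
      exact this (Set.Finite.subset htcfin (by rintro _ ⟨k, rfl⟩; exact hall k))
    obtain ⟨k, hk⟩ := hwit
    refine ⟨((s₀, F₀), k), ?_⟩
    intro s hs
    rcases hsub hs with ⟨X, hX⟩ | hcof
    · rcases hX with ⟨hXF, rfl⟩ | ⟨hXF, rfl⟩
      · -- s = AX X with X ∈ F, so X ∈ P
        refine ⟨s₀.filter (· ∈ X), ?_, ?_⟩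
        · rw [hF₀]
          exact Finset.mem_image.2 ⟨X, hPfin.mem_toFinset.2 ⟨hXF, hs⟩, rfl⟩
        · ext m
          simp [Finset.coe_filter]
      · -- s = (AX X)ᶜ with X ∉ F, so X ∈ Nn
        intro hmem
        obtain ⟨tt, htt, htteq⟩ := hmem
        rw [hF₀] at htt
        obtain ⟨Y, hY, rfl⟩ := Finset.mem_image.1 htt
        have hYP : Y ∈ P := hPfin.mem_toFinset.1 hY
        refine hsep Y hYP X ⟨hXF, hs⟩ ?_
        rw [← htteq]
        ext m
        simp [Finset.coe_filter]
    · -- s is cofinite: our point is not in sᶜ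
      by_contra hns
      exact hk (Set.mem_biUnion ⟨hs, hcof⟩ hns)
  -- build the ultrafilters
  have hne : ∀ F, Filter.NeBot (Filter.generate (C F)) := fun F =>
    Filter.generate_neBot_iff.2 (hFIP F)
  have hult : ∀ F : Set (Set ℕ), ∃ u : Ultrafilter TT, ↑u ≤ Filter.generate (C F) := by
    intro F
    haveI := hne F
    exact Ultrafilter.exists_le (Filter.generate (C F))
  choose Φ hΦ using hult
  have hmemC : ∀ F s, s ∈ C F → s ∈ Φ F := by
    intro F s hs
    refine hΦ F ?_
    exact Filter.mem_generate_iff.2 ⟨{s}, by simpa using hs, Set.finite_singleton s, by simp⟩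
  refine ⟨Φ, ?_, ?_⟩
  · intro F F' hFF
    by_contra hne'
    have : ∃ X, ¬ (X ∈ F ↔ X ∈ F') := by
      by_contra hA
      push_neg at hA
      exact hne' (Set.ext fun X => hA X)
    obtain ⟨X, hX⟩ := this
    rcases Classical.em (X ∈ F) with hXF | hXF
    · have hXF' : X ∉ F' := fun h => hX ⟨fun _ => h, fun _ => hXF⟩
      have h1 : AX X ∈ Φ F := hmemC F _ (Or.inl ⟨X, Or.inl ⟨hXF, rfl⟩⟩)
      have h2 : (AX X)ᶜ ∈ Φ F' := hmemC F' _ (Or.inl ⟨X, Or.inr ⟨hXF', rfl⟩⟩)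
      rw [hFF] at h1
      exact (Ultrafilter.compl_mem_iff_notMem.1 h2) h1
    · have hXF' : X ∈ F' := by
        by_contra h
        exact hX ⟨fun h' => absurd h' hXF, fun h' => absurd h' h⟩
      have h1 : (AX X)ᶜ ∈ Φ F := hmemC F _ (Or.inl ⟨X, Or.inr ⟨hXF, rfl⟩⟩)
      have h2 : AX X ∈ Φ F' := hmemC F' _ (Or.inl ⟨X, Or.inl ⟨hXF', rfl⟩⟩)
      rw [hFF] at h1
      exact (Ultrafilter.compl_mem_iff_notMem.1 h1) h2
  · intro F s hcof
    exact hmemC F s (Or.inr hcof)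

end Aux6
/-- For each non-diagonal `[a]` in the ultrapower there are at least `2^(2^ℵ₀)`-many
ultrafilters whose ω-neighborhoods are `P`-isomorphic to that of `[a]` and pairwise
distinct. -/
theorem lemma26_ii {A I : Type*} [Infinite I] (R : A → A → Prop) (h : AlmostBounded R)
    (κ : Cardinal) (hκ : ℵ₀ ≤ κ) (𝒟 : Ultrafilter I) (hreg : IsRegular 𝒟 κ)
    (a : UP 𝒟 A) (ha : a ∉ Set.range (diag 𝒟 : A → UP 𝒟 A)) :
    ∃ U : Set (Ultrafilter A),
      (2 : Cardinal) ^ ((2 : Cardinal) ^ (ℵ₀ : Cardinal)) ≤ #U ∧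
      (∀ u ∈ U, PIsoUeUp R 𝒟 (onbhd (ueRel (SRel R)) u) (onbhd (upRel 𝒟 (SRel R)) a) u a) ∧
      (∀ u ∈ U, ∀ v ∈ U, u ≠ v →
        onbhd (ueRel (SRel R)) u ≠ onbhd (ueRel (SRel R)) v) := by
  classical
  obtain ⟨x, rfl⟩ := Quotient.exists_rep a
  haveI : Nonempty A := ⟨x (Classical.arbitrary I)⟩
  obtain ⟨hTfin, n, hdeg⟩ := h
  -- finiteness and cardinality of the S-neighbourhoods
  have hSfin : ∀ w : A, {v | SRel R w v}.Finite ∧ {v | SRel R v w}.Finite := by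
    intro w
    by_cases hw : w ∈ RInf R
    · constructor
      · refine Set.Finite.subset Set.finite_empty fun v hv => ?_
        exact absurd (Or.inl hw) hv.2
      · refine Set.Finite.subset Set.finite_empty fun v hv => ?_
        exact absurd (Or.inr hw) hv.2
    · have hfw : {v | R w v}.Finite ∧ {v | R v w}.Finite := by
        rw [RInf, Set.mem_setOf_eq] at hw
        push_neg at hw
        exact ⟨hw.1, hw.2⟩
      exact ⟨hfw.1.subset fun v hv => hv.1, hfw.2.subset fun v hv => hv.1⟩
  have hScard : ∀ w : A, {v | SRel R w v}.ncard ≤ n ∧ {v | SRel R v w}.ncard ≤ n := by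
    intro w
    by_cases hw : w ∈ RInf R
    · have h1 : {v | SRel R w v} = ∅ := by
        ext v; simp only [Set.mem_setOf_eq, Set.mem_empty_iff_false, iff_false]
        exact fun hv => hv.2 (Or.inl hw)
      have h2 : {v | SRel R v w} = ∅ := by
        ext v; simp only [Set.mem_setOf_eq, Set.mem_empty_iff_false, iff_false]
        exact fun hv => hv.2 (Or.inr hw)
      rw [h1, h2]
      simp
    · have hfw : {v | R w v}.Finite ∧ {v | R v w}.Finite := by
        rw [RInf, Set.mem_setOf_eq] at hw
        push_neg at hw
        exact ⟨hw.1, hw.2⟩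
      constructor
      · exact le_trans (Set.ncard_le_ncard (fun v hv => hv.1) hfw.1) (hdeg w hw).1
      · exact le_trans (Set.ncard_le_ncard (fun v hv => hv.1) hfw.2) (hdeg w hw).2
  -- selector functions
  have hsel : ∀ w : A, ∃ g : Fin (n + 1) → A,
      (∀ v ∈ {v | SRel R w v}, ∃ j, g j = v) ∧ ∀ j, g j ∈ {v | SRel R w v} ∨ g j = w :=
    fun w => exists_cover _ (hSfin w).1 (hScard w).1 w
  have hsel' : ∀ w : A, ∃ g : Fin (n + 1) → A,
      (∀ v ∈ {v | SRel R v w}, ∃ j, g j = v) ∧ ∀ j, g j ∈ {v | SRel R v w} ∨ g j = w :=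
    fun w => exists_cover _ (hSfin w).2 (hScard w).2 w
  choose e he1x he2x using hsel
  choose e' he1x' he2x' using hsel'
  have he1 : ∀ w v, SRel R w v → ∃ j, e w j = v := fun w v hv => he1x w v hv
  have he2 : ∀ w j, SRel R w (e w j) ∨ e w j = w := he2x
  have he1' : ∀ w v, SRel R v w → ∃ j, e' w j = v := fun w v hv => he1x' w v hv
  have he2' : ∀ w j, SRel R (e' w j) w ∨ e' w j = w := he2x'
  clear he1x he2x he1x' he2x'
  -- the countable index family of "basic" sets
  haveI : Finite ↥(RInf R) := hTfin.to_subtype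
  set Idx := (List (Bool × Fin (n + 1)) × List (Bool × Fin (n + 1)) × Bool) ⊕
    ((List (Bool × Fin (n + 1)) × (↥(RInf R)) × Bool) ⊕ List (Bool × Fin (n + 1))) with hIdx
  set basic : Idx → Set A := fun idx =>
    match idx with
    | Sum.inl (L, L', true) => {w | ev e e' L w = ev e e' L' w}
    | Sum.inl (L, L', false) => {w | SRel R (ev e e' L w) (ev e e' L' w)}
    | Sum.inr (Sum.inl (L, t, true)) => {w | PRel R (ev e e' L w) ↑t}
    | Sum.inr (Sum.inl (L, t, false)) => {w | PRel R ↑t (ev e e' L w)}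
    | Sum.inr (Sum.inr L) => econd R e e' L
    with hbasic
  haveI : Nonempty Idx := ⟨Sum.inr (Sum.inr [])⟩
  obtain ⟨σ, hσ⟩ := exists_surjective_nat Idx
  obtain ⟨ℒ, hℒ⟩ := exists_surjective_nat (List (Bool × Fin (n + 1)))
  set ux : Ultrafilter A := 𝒟.map x with hux
  set adj : Idx → Set A := fun i => if basic i ∈ ux then basic i else (basic i)ᶜ with hadj
  have hadjmem : ∀ i, adj i ∈ ux := by
    intro i
    by_cases hbi : basic i ∈ ux
    · have h1 : adj i = basic i := if_pos hbi
      rw [h1]; exact hbi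
    · have h1 : adj i = (basic i)ᶜ := if_neg hbi
      rw [h1]; exact Ultrafilter.compl_mem_iff_notMem.2 hbi
  set G : ℕ → Set A := fun m => ⋂ k ∈ Set.Iic m, adj (σ k) with hG
  have hGmem : ∀ m, G m ∈ ux := fun m =>
    (Filter.biInter_mem (Set.finite_Iic m)).2 fun k _ => hadjmem (σ k)
  have hGinf : ∀ m, (G m).Infinite := fun m =>
    nondiag_infinite 𝒟 x ha _ (Ultrafilter.mem_map.1 (hGmem m))
  set fs : ℕ → A → A := fun k => ev e e' (ℒ k) with hfs
  have hfib : ∀ k (K : Set A), K.Finite → (fs k ⁻¹' K).Finite := fun k K hK =>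
    ev_fiber_finite hSfin he2 he2' (ℒ k) K hK
  obtain ⟨b, hbP⟩ := exists_good_seq G hGinf fs hfib
  set D : Set A := Set.range b with hD
  -- b is injective
  have hbinj : Function.Injective b := by
    intro p q hpq
    rcases lt_trichotomy p q with hlt | heq | hlt
    · exact absurd hpq.symm ((hbP q).2.1 p hlt)
    · exact heq
    · exact absurd hpq ((hbP p).2.1 q hlt)
  -- tail of D is inside each adjusted basic set
  have hDadj : ∀ i, (D \ adj i).Finite := by
    intro i
    obtain ⟨k, hk⟩ := hσ i
    refine Set.Finite.subset ((Set.finite_Iio k).image b) ?_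
    rintro z ⟨⟨m, rfl⟩, hz⟩
    refine ⟨m, ?_, rfl⟩
    by_contra hm
    rw [Set.mem_Iio, not_lt] at hm
    refine hz ?_
    have hGm : b m ∈ ⋂ k' ∈ Set.Iic m, adj (σ k') := (hbP m).1
    have := Set.mem_iInter₂.1 hGm k (Set.mem_Iic.2 hm)
    rwa [hk] at this
  -- the trace property for all ultrafilters concentrated on D
  have hTrace : ∀ u : Ultrafilter A, (∀ s : Set A, (D \ s).Finite → s ∈ u) →
      ∀ i, (basic i ∈ u ↔ basic i ∈ ux) := by
    intro u hu i
    have hadjm : adj i ∈ u := hu _ (hDadj i)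
    by_cases hbi : basic i ∈ ux
    · have h1 : adj i = basic i := if_pos hbi
      rw [h1] at hadjm
      exact iff_of_true hadjm hbi
    · have h1 : adj i = (basic i)ᶜ := if_neg hbi
      rw [h1] at hadjm
      exact iff_of_false (Ultrafilter.compl_mem_iff_notMem.1 hadjm) hbi
  -- the separation property
  have hSep : ∀ u : Ultrafilter A, (∀ s : Set A, (D \ s).Finite → s ∈ u) →
      ∀ L L', u.map (ev e e' L) = u.map (ev e e' L') →
        {w | ev e e' L w = ev e e' L' w} ∈ u := by
    intro u hu L L' hmapeq
    by_contra hEu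
    have hEux : {w | ev e e' L w = ev e e' L' w} ∉ ux := by
      intro hc
      exact hEu ((hTrace u hu (Sum.inl (L, L', true))).2 hc)
    obtain ⟨k₁, hk₁⟩ := hℒ L
    obtain ⟨k₂, hk₂⟩ := hℒ L'
    obtain ⟨kE, hkE⟩ := hσ (Sum.inl (L, L', true))
    set K := max (max k₁ k₂) kE with hK
    set Z : Set A := ev e e' L '' D with hZ
    have hsmall : D ∩ ev e e' L' ⁻¹' Z ⊆ b '' Set.Iic K := by
      rintro z ⟨⟨m, rfl⟩, hzin⟩
      obtain ⟨z', ⟨m', rfl⟩, heq⟩ := hzin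
      refine ⟨m, ?_, rfl⟩
      rw [Set.mem_Iic]
      by_contra hm
      rw [not_le] at hm
      have hk₁K : k₁ ≤ K := le_trans (le_max_left _ _) (le_max_left _ _)
      have hk₂K : k₂ ≤ K := le_trans (le_max_right _ _) (le_max_left _ _)
      have hkEK : kE ≤ K := le_max_right _ _
      rcases lt_trichotomy m' m with hlt | hmeq | hlt
      · have hne := (hbP m).2.2 k₂ (le_of_lt (lt_of_le_of_lt hk₂K hm))
          k₁ (le_of_lt (lt_of_le_of_lt hk₁K hm)) m' hlt
        refine hne ?_
        show ev e e' (ℒ k₂) (b m) = ev e e' (ℒ k₁) (b m')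
        rw [hk₁, hk₂]
        exact heq.symm
      · subst hmeq
        have hGm : b m' ∈ ⋂ k' ∈ Set.Iic m', adj (σ k') := (hbP m').1
        have hadjm := Set.mem_iInter₂.1 hGm kE (Set.mem_Iic.2 (le_of_lt (lt_of_le_of_lt hkEK hm)))
        rw [hkE] at hadjm
        have h1 : adj (Sum.inl (L, L', true)) = {w | ev e e' L w = ev e e' L' w}ᶜ := if_neg hEux
        rw [h1] at hadjm
        exact hadjm heq
      · have hne := (hbP m').2.2 k₁ (le_of_lt (lt_of_le_of_lt hk₁K (lt_trans hm hlt)))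
          k₂ (le_of_lt (lt_of_le_of_lt hk₂K (lt_trans hm hlt))) m hlt
        refine hne ?_
        show ev e e' (ℒ k₁) (b m') = ev e e' (ℒ k₂) (b m)
        rw [hk₁, hk₂]
        exact heq
    have hZmem : Z ∈ u.map (ev e e' L) := by
      rw [Ultrafilter.mem_map]
      refine hu _ ?_
      have hsub : D ⊆ ev e e' L ⁻¹' Z := fun z hz => Set.mem_image_of_mem _ hz
      rw [Set.diff_eq_empty.2 hsub]
      exact Set.finite_empty
    have hZnot : Z ∉ u.map (ev e e' L') := by
      rw [Ultrafilter.mem_map]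
      intro hc
      have hcc : (ev e e' L' ⁻¹' Z)ᶜ ∈ u := by
        refine hu _ ?_
        rw [Set.diff_compl]
        exact Set.Finite.subset ((Set.finite_Iic K).image b) hsmall
      exact (Ultrafilter.compl_mem_iff_notMem.1 hcc) hc
    rw [hmapeq] at hZmem
    exact hZnot hZmem
  -- the isomorphism property for all ultrafilters concentrated on D
  have hIso : ∀ u : Ultrafilter A, (∀ s : Set A, (D \ s).Finite → s ∈ u) →
      PIsoUeUp R 𝒟 (onbhd (ueRel (SRel R)) u)
        (onbhd (upRel 𝒟 (SRel R)) (Quotient.mk (upSetoid 𝒟 A) x))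
        u (Quotient.mk (upSetoid 𝒟 A) x) := by
    intro u hu
    refine good_iso R 𝒟 he1 he1' x u ?_ ?_ ?_ ?_ ?_ (hSep u hu)
    · intro L
      have := hTrace u hu (Sum.inr (Sum.inr L))
      rw [hbasic] at this
      simp only at this
      rw [this, hux]
      exact Ultrafilter.mem_map
    · intro L L'
      have := hTrace u hu (Sum.inl (L, L', true))
      rw [hbasic] at this
      simp only at this
      rw [this, hux]
      exact Ultrafilter.mem_map
    · intro L L'
      have := hTrace u hu (Sum.inl (L, L', false))
      rw [hbasic] at this
      simp only at this
      rw [this, hux]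
      exact Ultrafilter.mem_map
    · intro L t ht
      have := hTrace u hu (Sum.inr (Sum.inl (L, ⟨t, ht⟩, true)))
      rw [hbasic] at this
      simp only at this
      rw [this, hux]
      exact Ultrafilter.mem_map
    · intro L t ht
      have := hTrace u hu (Sum.inr (Sum.inl (L, ⟨t, ht⟩, false)))
      rw [hbasic] at this
      simp only at this
      rw [this, hux]
      exact Ultrafilter.mem_map
  -- the family of ultrafilters concentrated on D
  obtain ⟨Φ₀, hΦ₀inj, hΦ₀cof⟩ := exists_many_ultrafilters
  haveI : Infinite TT := by
    refine Infinite.of_injective (fun k : ℕ => ((({} : Finset ℕ), ({} : Finset (Finset ℕ))), k)) ?_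
    intro k k' hk
    simpa using congrArg Prod.snd hk
  haveI : Denumerable TT := Denumerable.ofEncodableOfInfinite TT
  set emb : TT → A := fun p => b (Denumerable.eqv TT p) with hemb
  have hembinj : Function.Injective emb :=
    hbinj.comp (Denumerable.eqv TT).injective
  have hembD : ∀ p, emb p ∈ D := fun p => ⟨Denumerable.eqv TT p, rfl⟩
  set Φ : Set (Set ℕ) → Ultrafilter A := fun F => (Φ₀ F).map emb with hΦ
  have hΦgood : ∀ F, ∀ s : Set A, (D \ s).Finite → s ∈ Φ F := by
    intro F s hs
    rw [hΦ]
    simp only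
    rw [Ultrafilter.mem_map]
    refine hΦ₀cof F _ ?_
    rw [← Set.preimage_compl]
    have hsub : emb ⁻¹' sᶜ ⊆ emb ⁻¹' (D \ s) := by
      intro p hp
      exact ⟨hembD p, hp⟩
    exact Set.Finite.subset (hs.preimage hembinj.injOn) hsub
  have hΦinj : Function.Injective Φ := by
    intro F F' hFF
    refine hΦ₀inj ?_
    refine Ultrafilter.ext fun s => ?_
    have h1 : s = emb ⁻¹' (emb '' s) := (Set.preimage_image_eq s hembinj).symm
    constructor
    · intro hs
      have : emb '' s ∈ Φ F := Ultrafilter.mem_map.2 (by rw [← h1]; exact hs)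
      rw [hFF] at this
      rw [h1]
      exact Ultrafilter.mem_map.1 this
    · intro hs
      have : emb '' s ∈ Φ F' := Ultrafilter.mem_map.2 (by rw [← h1]; exact hs)
      rw [← hFF] at this
      rw [h1]
      exact Ultrafilter.mem_map.1 this
  -- neighborhoods are countable
  have hOcount : ∀ u : Ultrafilter A, (onbhd (ueRel (SRel R)) u).Countable := by
    intro u
    refine Set.Countable.mono ?_
      (Set.countable_range fun L : List (Bool × Fin (n + 1)) => u.map (ev e e' L))
    intro v hv
    obtain ⟨m, hm⟩ := Set.mem_iUnion.1 hv
    obtain ⟨L, _, hL⟩ := ue_nbhd_sub he1 he1' u m v hm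
    exact ⟨L, hL.symm⟩
  -- the map to neighborhoods has countable fibers
  set q : Set (Set ℕ) → Set (Ultrafilter A) := fun F => onbhd (ueRel (SRel R)) (Φ F) with hq
  have hself : ∀ F, Φ F ∈ q F := fun F => Set.mem_iUnion.2 ⟨0, rfl⟩
  have hfibcount : ∀ s0 : Set (Ultrafilter A), {F | q F = s0}.Countable := by
    intro s0
    rcases Set.eq_empty_or_nonempty {F | q F = s0} with hemp | ⟨F₀, hF₀⟩
    · rw [hemp]; exact Set.countable_empty
    · have hsub : {F | q F = s0}⊆ Φ ⁻¹' (onbhd (ueRel (SRel R)) (Φ F₀)) := by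
        intro F hF
        have : Φ F ∈ q F := hself F
        rw [hF] at this
        rw [← hF₀] at this
        exact this
      exact Set.Countable.mono hsub ((hOcount (Φ F₀)).preimage hΦinj)
  -- cardinality counting
  set rng := Set.range q with hrng
  set q' : Set (Set ℕ) → ↥rng := fun F => ⟨q F, Set.mem_range_self F⟩ with hq'
  have hcard1 : Cardinal.lift.{_, 0} #(Set (Set ℕ)) ≤ Cardinal.lift.{0} #(↥rng) * ℵ₀ := by
    refine Cardinal.lift_mk_le_lift_mk_mul_of_lift_mk_preimage_le q' ?_
    intro s0
    have : (q' ⁻¹' {s0}).Countable := by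
      refine Set.Countable.mono ?_ (hfibcount s0.1)
      intro F hF
      have : q' F = s0 := hF
      have := congrArg Subtype.val this
      exact this
    calc Cardinal.lift.{_} #(q' ⁻¹' {s0}) ≤ Cardinal.lift.{_} ℵ₀ := by
          rw [Cardinal.lift_le]
          exact Cardinal.mk_le_aleph0_iff.2 this.to_subtype
      _ = ℵ₀ := Cardinal.lift_aleph0
  have hrngcard : (2 : Cardinal) ^ ((2 : Cardinal) ^ (ℵ₀ : Cardinal)) ≤ #(↥rng) := by
    have hlam : (2 : Cardinal) ^ ((2 : Cardinal) ^ (ℵ₀ : Cardinal)) =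
        Cardinal.lift.{_, 0} #(Set (Set ℕ)) := by
      rw [Cardinal.mk_set, Cardinal.mk_set, Cardinal.mk_nat, Cardinal.lift_power,
        Cardinal.lift_power, Cardinal.lift_ofNat, Cardinal.lift_aleph0]
    have h2 : Cardinal.lift.{0} #(↥rng) = #(↥rng) := Cardinal.lift_uzero _
    have hchain : (2 : Cardinal) ^ ((2 : Cardinal) ^ (ℵ₀ : Cardinal)) ≤ #(↥rng) * ℵ₀ := by
      rw [hlam, ← h2]
      exact hcard1
    have haleph : (ℵ₀ : Cardinal) < (2 : Cardinal) ^ ((2 : Cardinal) ^ (ℵ₀ : Cardinal)) := by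
      refine lt_of_lt_of_le (Cardinal.cantor ℵ₀) ?_
      refine Cardinal.power_le_power_left two_ne_zero ?_
      exact le_of_lt (Cardinal.cantor ℵ₀)
    by_cases hsmol : #(↥rng) ≤ ℵ₀
    · exfalso
      have : (2 : Cardinal) ^ ((2 : Cardinal) ^ (ℵ₀ : Cardinal)) ≤ ℵ₀ * ℵ₀ :=
        le_trans hchain (mul_le_mul' hsmol le_rfl)
      rw [Cardinal.aleph0_mul_aleph0] at this
      exact absurd this (not_le.2 haleph)
    · rw [not_le] at hsmol
      have := Cardinal.mul_eq_max (le_of_lt hsmol) le_rfl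
      rw [this] at hchain
      rcases max_cases #(↥rng) (ℵ₀ : Cardinal) with ⟨hmax, _⟩ | ⟨hmax, hle⟩
      · rwa [hmax] at hchain
      · rw [hmax] at hchain
        exact absurd hchain (not_le.2 haleph)
  -- choose representatives with pairwise distinct neighborhoods
  have hrep : ∀ s : ↥rng, ∃ F : Set (Set ℕ), q F = (s : Set (Ultrafilter A)) := fun s => s.2
  set rep : ↥rng → Ultrafilter A := fun s => Φ (hrep s).choose with hrepdef
  have hrepO : ∀ s : ↥rng, onbhd (ueRel (SRel R)) (rep s) = (s : Set (Ultrafilter A)) :=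
    fun s => (hrep s).choose_spec
  have hrepinj : Function.Injective rep := by
    intro s s' hss
    apply Subtype.ext
    rw [← hrepO s, ← hrepO s', hss]
  refine ⟨Set.range rep, ?_, ?_, ?_⟩
  · rw [Cardinal.mk_range_eq rep hrepinj]
    exact hrngcard
  · rintro u ⟨s, rfl⟩
    exact hIso _ (hΦgood _)
  · rintro u ⟨s, rfl⟩ v ⟨s', rfl⟩ hne hO
    refine hne ?_
    rw [hrepO s, hrepO s'] at hO
    rw [hrepdef]
    simp only
    rw [Subtype.ext hO]

end UEx
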